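/- If a_τ ≠ 0, then τ_cp ≠ τ_m and ρ(τ_cp) = −(aᵀg)²/(2·aᵀBa). -/

import Mathlib

open scoped RealInnerProductSpace

/-! Write `s = aᵀg`, `q = aᵀBa > 0` and `N = ‖a‖²`, so that `a_τ = q - N s`. At the Cauchy step
`τ = -s / a_τ` the denominator of `ρ` is `1 - τ N = q / a_τ ≠ 0`, hence `τ ≠ 1 / N`, and substituting
gives `ρ(τ) = -s² / q + s² / (2q) = -s² / (2q)`. -/

theorem Matrix.PosDef.inner_toEuclideanLin_self_pos {n : Type*} [Fintype n] [DecidableEq n]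
    {B : Matrix n n ℝ} (hB : B.PosDef) {a : EuclideanSpace ℝ n} (ha : a ≠ 0) :
    0 < ⟪a, Matrix.toEuclideanLin B a⟫ := by
  have hpos := hB.dotProduct_mulVec_pos (x := WithLp.equiv 2 _ a) (by simpa using ha)
  rw [EuclideanSpace.inner_eq_star_dotProduct]
  simpa [Matrix.toLpLin_apply, dotProduct_comm] using hpos

section CauchyStep

variable {s q N : ℝ}

theorem one_sub_cauchyStep_mul (hd : q - N * s ≠ 0) :
    1 - -s / (q - N * s) * N = q / (q - N * s) := by
  rw [div_mul_eq_mul_div, one_sub_div hd]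
  ring_nf

theorem cauchyStep_ne_inv (hq : q ≠ 0) (hN : N ≠ 0) (hd : q - N * s ≠ 0) :
    -s / (q - N * s) ≠ 1 / N := by
  intro h
  have := one_sub_cauchyStep_mul (s := s) hd
  rw [h, one_div_mul_cancel hN, sub_self] at this
  exact div_ne_zero hq hd this.symm

theorem model_at_cauchyStep (hq : q ≠ 0) (hd : q - N * s ≠ 0) :
    (-s / (q - N * s)) * s / (1 - -s / (q - N * s) * N)
      + (-s / (q - N * s)) ^ 2 * q / (2 * (1 - -s / (q - N * s) * N) ^ 2)
      = -s ^ 2 / (2 * q) := by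
  rw [one_sub_cauchyStep_mul hd]
  generalize q - N * s = d at hd ⊢
  field_simp
  ring

end CauchyStep

theorem stmt_10 {{n : ℕ}} (hn : 1 ≤ n)
    (a g : EuclideanSpace ℝ (Fin n)) (ha : a ≠ 0)
    (B : Matrix (Fin n) (Fin n) ℝ) (hBs : B.IsSymm) (hBpd : B.PosDef)
    (ρ : ℝ → ℝ)
    (hρ : ∀ τ : ℝ, τ ≠ 1 / ‖a‖ ^ 2 →
      ρ τ = τ * ⟪a, g⟫ / (1 - τ * ‖a‖ ^ 2)
        + τ ^ 2 * ⟪a, Matrix.toEuclideanLin B a⟫ / (2 * (1 - τ * ‖a‖ ^ 2) ^ 2))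
    (aτ τm : ℝ)
    (haτ : aτ = ⟪a, Matrix.toEuclideanLin B a⟫ - ‖a‖ ^ 2 * ⟪a, g⟫)
    (hτm : τm = 1 / ‖a‖ ^ 2)
    (τcp : ℝ) (hτcp : aτ ≠ 0 → τcp = -⟪a, g⟫ / aτ)
    (haτne : aτ ≠ 0) :
    τcp ≠ τm ∧ ρ τcp = -⟪a, g⟫ ^ 2 / (2 * ⟪a, Matrix.toEuclideanLin B a⟫) := by
  have hq := (hBpd.inner_toEuclideanLin_self_pos ha).ne'
  have hcp := hτcp haτne
  subst haτ hτm hcp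
  have hne := cauchyStep_ne_inv hq (by positivity) haτne
  exact ⟨hne, (hρ _ hne).trans (model_at_cauchyStep hq haτne)⟩
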